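/- arXiv:2007.01563 — 5 statements merged into one kernel-verified Lean document; each statement's English description precedes it below -/
import Mathlib

section
/- For every integer k with 1 ≤ k ≤ 6, the complex function y ↦ δ(e^{−y}) − y + y^{k+1}/(k+1) is big-O of y^{k+2} as y → 0 in ℂ; equivalently, δ(e^{−y}) = y − (1/(k+1))·y^{k+1} + O(y^{k+2}) near y = 0. -/
open Real Filter Asymptotics

/-- Generating polynomial of the k-step BDF method: δ(ξ) = ∑_{j=1}^{k} (1/j)(1−ξ)^j. -/
noncomputable def bdfDelta (k : ℕ) (ξ : ℂ) : ℂ :=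
  ∑ j ∈ Finset.Icc 1 k, (1 / (j : ℂ)) * (1 - ξ) ^ j

/-!
Put `u = 1 - e^{-y}`, so that `-log (1 - u) = y` near `0`. Since `δ(1 - u) = ∑_{j ≤ k} u^j / j` is
the Taylor polynomial of `-log (1 - u) = ∑_{j ≥ 1} u^j / j`, we get
`δ(e^{-y}) - y = -u^{k+1}/(k+1) + O(u^{k+2})`, and `u = y + O(y^2)` turns `u^{k+1}` into
`y^{k+1} + O(y^{k+2})`.
-/

open Finset Topology

theorem Asymptotics.IsBigO.pow_succ_sub_pow_succ {α R S : Type*} [SeminormedCommRing R]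
    [NormedRing S] [NormMulClass S] [NormOneClass S] {l : Filter α} {f g : α → R}
    {φ ψ : α → S} (hf : f =O[l] φ) (hg : g =O[l] φ) (hfg : (fun x => f x - g x) =O[l] ψ)
    (n : ℕ) : (fun x => f x ^ (n + 1) - g x ^ (n + 1)) =O[l] fun x => φ x ^ n * ψ x := by
  have hsum : (fun x => ∑ i ∈ range (n + 1), f x ^ i * g x ^ (n + 1 - 1 - i)) =O[l]
      fun x => φ x ^ n := by
    refine IsBigO.fun_sum fun i hi => ?_
    have hin : i + (n - i) = n := Nat.add_sub_cancel' (Nat.le_of_lt_succ (mem_range.mp hi))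
    simpa only [Nat.add_sub_cancel, ← pow_add, hin] using (hf.pow i).mul (hg.pow (n - i))
  simpa only [geom_sum₂_mul] using hsum.mul hfg

namespace Complex

theorem exp_sub_one_sub_self_isBigO : (fun z => exp z - 1 - z) =O[𝓝 0] fun z => z ^ 2 :=
  IsBigO.of_bound 1 <| by
    filter_upwards [Metric.closedBall_mem_nhds (0 : ℂ) one_pos] with z hz
    rw [one_mul, norm_pow]
    exact norm_exp_sub_one_sub_id_le (by simpa using hz)

theorem log_exp_eventually_eq : ∀ᶠ z in 𝓝 0, log (exp z) = z := by
  have him : Set.Ioo (-π) π ∈ 𝓝 (0 : ℂ).im := Ioo_mem_nhds (by simp [pi_pos]) pi_pos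
  filter_upwards [continuous_im.continuousAt.preimage_mem_nhds him] with z hz
  exact log_exp hz.1 hz.2.le

theorem logTaylor_neg (n : ℕ) (z : ℂ) : logTaylor n (-z) = -∑ j ∈ range n, z ^ j / j := by
  rw [logTaylor, ← sum_neg_distrib]
  refine sum_congr rfl fun j _ => ?_
  rw [neg_pow z, ← mul_assoc, ← pow_add, Odd.neg_one_pow ⟨j, by ring⟩, neg_one_mul, neg_div]

theorem neg_log_one_sub_sub_isBigO (n : ℕ) :
    (fun z => -log (1 - z) - ∑ j ∈ range (n + 1), z ^ j / j) =O[𝓝 0] fun z => z ^ (n + 1) := by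
  have hneg : Tendsto (fun z : ℂ => -z) (𝓝 0) (𝓝 0) := by simpa using tendsto_neg (0 : ℂ)
  refine (((log_sub_logTaylor_isBigO n).comp_tendsto hneg).neg_left.congr_left fun z => ?_).trans
    (isBigO_of_le _ fun z => ?_)
  · simp only [Function.comp_apply, logTaylor_neg, ← sub_eq_add_neg, sub_neg_eq_add, neg_add]
  · simp only [Function.comp_apply, norm_pow, norm_neg, le_refl]

end Complex

theorem bdfDelta_eq_sum_range (k : ℕ) (ξ : ℂ) :
    bdfDelta k ξ = ∑ j ∈ range (k + 1), (1 - ξ) ^ j / j := by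
  rw [bdfDelta, range_eq_Ico, sum_eq_sum_Ico_succ_bot (by positivity),
    Ico_add_one_right_eq_Icc]
  simp only [Nat.cast_zero, div_zero, zero_add, one_div, inv_mul_eq_div]

theorem bdfDelta_expansion_general (k : ℕ) :
    (fun y : ℂ => bdfDelta k (Complex.exp (-y)) - y + y ^ (k + 1) / ((k : ℂ) + 1))
      =O[nhds (0 : ℂ)] fun y : ℂ => y ^ (k + 2) := by
  set u : ℂ → ℂ := fun y => 1 - Complex.exp (-y)
  have hneg : Tendsto (fun y : ℂ => -y) (𝓝 0) (𝓝 0) := by simpa using tendsto_neg (0 : ℂ)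
  have hu_sub : (fun y => y - u y) =O[𝓝 0] fun y => y ^ 2 :=
    (Complex.exp_sub_one_sub_self_isBigO.comp_tendsto hneg).congr
      (fun y => by simp only [Function.comp_apply, u]; ring) fun y => neg_sq y
  have hu : u =O[𝓝 0] fun y => y :=
    ((isBigO_refl _ _).sub (hu_sub.trans (isLittleO_pow_id one_lt_two).isBigO)).congr_left
      fun y => sub_sub_cancel y (u y)
  have hlog : (fun y => -Complex.log (1 - u y) - ∑ j ∈ range (k + 2), u y ^ j / j)
      =O[𝓝 0] fun y => y ^ (k + 2) :=
    ((Complex.neg_log_one_sub_sub_isBigO (k + 1)).comp_tendsto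
      (hu.trans_tendsto tendsto_id)).trans (hu.pow (k + 2))
  have hpow : (fun y => y ^ (k + 1) - u y ^ (k + 1)) =O[𝓝 0] fun y => y ^ (k + 2) :=
    ((isBigO_refl _ _).pow_succ_sub_pow_succ hu hu_sub k).congr_right fun y => (pow_add y k 2).symm
  refine (hlog.neg_left.add (hpow.const_mul_left ((k : ℂ) + 1)⁻¹)).congr' ?_ .rfl
  filter_upwards [hneg.eventually Complex.log_exp_eventually_eq] with y hy
  simp only [u, sub_sub_cancel, hy, bdfDelta_eq_sum_range, sum_range_succ]
  push_cast
  ring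

/-- For every 1 ≤ k ≤ 6, δ(e^{−y}) = y − y^{k+1}/(k+1) + O(y^{k+2}) as y → 0 in ℂ. -/
theorem bdfDelta_expansion (k : ℕ) (hk1 : 1 ≤ k) (hk6 : k ≤ 6) :
    (fun y : ℂ => bdfDelta k (Complex.exp (-y)) - y + y ^ (k + 1) / ((k : ℂ) + 1))
      =O[nhds (0 : ℂ)] fun y : ℂ => y ^ (k + 2) :=
  bdfDelta_expansion_general k
end

section
/- For every integer k with 1 ≤ k ≤ 6, every γ ∈ (0,1) and every κ > 0 there exists θ₀ ∈ (π/2, π) such that for every θ ∈ (π/2, θ₀] there is a constant c > 0 with the following property: for every τ > 0 satisfying κ·τ·sin θ ≤ π and every z ∈ Γ^τ_{θ,κ}, one has |(δ_τ(e^{−zτ}))^γ − z^γ| ≤ c·τ^k·|z|^{k+γ}. -/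
open Real

/-- Truncated sectorial contour Γ^τ_{θ,κ}. -/
noncomputable def contourTrunc (θ κ τ : ℝ) : Set ℂ :=
  {z : ℂ | ‖z‖ = κ ∧ |z.arg| ≤ θ} ∪
    {z : ℂ | ∃ r : ℝ, κ ≤ r ∧ r ≤ π / (τ * Real.sin θ) ∧
      (z = (r : ℂ) * Complex.exp (θ * Complex.I) ∨
        z = (r : ℂ) * Complex.exp (-θ * Complex.I))}

/-!
Put `w = z τ`. Since `(x / τ)^γ = x^γ / τ^γ` for `τ > 0`, the claim reduces to
`‖δ(e^{-w})^γ - w^γ‖ ≤ c ‖w‖^{k+γ}`, and for `θ ≤ 2π/3` the points `w` coming from the contour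
lie in the compact sector `|arg w| ≤ 2π/3`, `‖w‖ ≤ π / sin θ`.
With `x = 1 - e^{-w}` we have `w = log (1 - x)⁻¹ = ∑ xʲ/j`, and `δ(e^{-w})` is the truncation of
this series after `j = k`; hence `δ(e^{-w}) = w (1 + u)` with `‖u‖ = O(‖w‖^k)`. Because
`arg (1 + u)` is small, the principal power splits as `w^γ (1 + u)^γ`, which gives the bound
near `w = 0`; away from `0` both powers are bounded on the compact sector.
-/

lemma Complex.ofReal_mul_cpow {r : ℝ} (hr : 0 ≤ r) (x s : ℂ) :
    ((r : ℂ) * x) ^ s = (r : ℂ) ^ s * x ^ s := by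
  rcases hr.eq_or_lt with rfl | hr
  · rcases eq_or_ne s 0 with rfl | hs <;> simp [Complex.zero_cpow, *]
  rcases eq_or_ne x 0 with rfl | hx
  · rcases eq_or_ne s 0 with rfl | hs <;> simp [Complex.zero_cpow, *]
  have hr0 : (r : ℂ) ≠ 0 := Complex.ofReal_ne_zero.mpr hr.ne'
  rw [Complex.cpow_def_of_ne_zero (mul_ne_zero hr0 hx), Complex.cpow_def_of_ne_zero hr0,
    Complex.cpow_def_of_ne_zero hx, Complex.log_ofReal_mul hr hx, add_mul, Complex.exp_add,
    Complex.ofReal_log hr.le]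

lemma norm_div_cpow_sub_div_cpow {τ : ℝ} (hτ : 0 < τ) (x y : ℂ) (γ : ℝ) :
    ‖(x / τ) ^ (γ : ℂ) - (y / τ) ^ (γ : ℂ)‖ = ‖x ^ (γ : ℂ) - y ^ (γ : ℂ)‖ / τ ^ γ := by
  have hdiv (v : ℂ) : v / τ = ((τ⁻¹ : ℝ) : ℂ) * v := by push_cast; ring
  have hτinv : 0 ≤ τ⁻¹ := inv_nonneg.mpr hτ.le
  rw [hdiv, hdiv, Complex.ofReal_mul_cpow hτinv, Complex.ofReal_mul_cpow hτinv, ← mul_sub,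
    norm_mul, Complex.norm_cpow_real, Complex.norm_real, norm_of_nonneg hτinv,
    Real.inv_rpow hτ.le, inv_mul_eq_div]

lemma norm_mul_one_add_cpow_sub_cpow_le {w u : ℂ} {γ : ℝ} (hγ : |γ| ≤ 1)
    (hw : |w.arg| ≤ 2 * π / 3) (hu : ‖u‖ ≤ 1 / 2) :
    ‖(w * (1 + u)) ^ (γ : ℂ) - w ^ (γ : ℂ)‖ ≤ 3 * ‖w‖ ^ γ * ‖u‖ := by
  rcases eq_or_ne w 0 with rfl | hw0
  · simp only [zero_mul, sub_self, norm_zero]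
    positivity
  have hu1 : 1 + u ≠ 0 := by
    intro h
    rw [eq_neg_of_add_eq_zero_right h, norm_neg, norm_one] at hu
    norm_num at hu
  have hlog : ‖Complex.log (1 + u)‖ ≤ 3 / 2 * ‖u‖ := Complex.norm_log_one_add_half_le_self hu
  -- `arg (1 + u) = im (log (1 + u))` stays below `π / 3`, so `arg w + arg (1 + u) ∈ (-π, π]`
  have harg : |(1 + u).arg| ≤ 3 / 4 := by
    rw [← Complex.log_im]
    linarith [Complex.abs_im_le_norm (Complex.log (1 + u))]
  have hlog_mul : Complex.log (w * (1 + u)) = Complex.log w + Complex.log (1 + u) := by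
    rw [Complex.log_mul_eq_add_log_iff hw0 hu1]
    constructor <;> linarith [abs_le.mp hw, abs_le.mp harg, pi_gt_three]
  have hsmall : ‖Complex.log (1 + u) * γ‖ ≤ 3 / 2 * ‖u‖ := by
    rw [norm_mul, Complex.norm_real, norm_eq_abs]
    nlinarith [norm_nonneg (Complex.log (1 + u))]
  calc ‖(w * (1 + u)) ^ (γ : ℂ) - w ^ (γ : ℂ)‖
      = ‖w‖ ^ γ * ‖Complex.exp (Complex.log (1 + u) * γ) - 1‖ := by
        rw [Complex.cpow_def_of_ne_zero (mul_ne_zero hw0 hu1), hlog_mul, add_mul, Complex.exp_add,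
          ← Complex.cpow_def_of_ne_zero hw0, ← mul_sub_one, norm_mul, Complex.norm_cpow_real]
    _ ≤ ‖w‖ ^ γ * (2 * (3 / 2 * ‖u‖)) := by
        gcongr
        exact (Complex.norm_exp_sub_one_le (by linarith)).trans (by linarith)
    _ = 3 * ‖w‖ ^ γ * ‖u‖ := by ring

lemma logTaylor_neg_one_sub_eq_neg_bdfDelta (k : ℕ) (ξ : ℂ) :
    Complex.logTaylor (k + 1) (-(1 - ξ)) = -bdfDelta k ξ := by
  rw [Complex.logTaylor, bdfDelta, Finset.sum_range_succ', ← Finset.Ico_add_one_right_eq_Icc,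
    Finset.sum_Ico_eq_sum_range, ← Finset.sum_neg_distrib]
  simp only [Nat.cast_zero, div_zero, add_zero, Nat.add_sub_cancel]
  refine Finset.sum_congr rfl fun j _ => ?_
  rw [neg_pow (1 - ξ), ← mul_assoc, ← pow_add, Odd.neg_one_pow ⟨j + 1, by ring⟩, add_comm 1 j]
  ring

lemma norm_bdfDelta_exp_neg_sub_le (k : ℕ) {w : ℂ} (hw : ‖w‖ ≤ 1 / 4) :
    ‖bdfDelta k (Complex.exp (-w)) - w‖ ≤ 2 * (2 * ‖w‖) ^ (k + 1) := by
  set x := 1 - Complex.exp (-w) with hx_def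
  have hx : ‖x‖ ≤ 2 * ‖w‖ := by
    rw [hx_def, ← norm_neg, neg_sub]
    simpa using Complex.norm_exp_sub_one_le (x := -w) (by rw [norm_neg]; linarith)
  -- `δ(e^{-w})` is the degree-`k` Taylor polynomial of `w = log (1 - x)⁻¹` in `x`
  have hlog : Complex.log (1 - x)⁻¹ = w := by
    have hw_im := abs_le.mp ((Complex.abs_im_le_norm w).trans hw)
    rw [hx_def, sub_sub_cancel, ← Complex.exp_neg, neg_neg]
    exact Complex.log_exp (by linarith [pi_gt_three]) (by linarith [pi_gt_three])
  have htaylor := Complex.norm_log_one_sub_inv_add_logTaylor_neg_le k (by linarith : ‖x‖ < 1)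
  rw [hlog, logTaylor_neg_one_sub_eq_neg_bdfDelta, ← sub_eq_add_neg, norm_sub_rev] at htaylor
  calc ‖bdfDelta k (Complex.exp (-w)) - w‖
      ≤ ‖x‖ ^ (k + 1) * (1 - ‖x‖)⁻¹ / (k + 1) := htaylor
    _ ≤ (2 * ‖w‖) ^ (k + 1) * 2 / 1 := by
        gcongr
        · exact inv_nonneg.mpr (by linarith)
        · rw [inv_le_comm₀ (by linarith) two_pos]
          linarith
        · linarith
    _ = 2 * (2 * ‖w‖) ^ (k + 1) := by ring

lemma norm_bdfDelta_exp_neg_cpow_sub_cpow_le {k : ℕ} (hk : 1 ≤ k) {γ : ℝ} (hγ : |γ| ≤ 1)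
    {w : ℂ} (harg : |w.arg| ≤ 2 * π / 3) (hw : ‖w‖ ≤ 1 / 16) :
    ‖bdfDelta k (Complex.exp (-w)) ^ (γ : ℂ) - w ^ (γ : ℂ)‖ ≤
      3 * 2 ^ (k + 2) * ‖w‖ ^ ((k : ℝ) + γ) := by
  set D := bdfDelta k (Complex.exp (-w))
  have hD : ‖D - w‖ ≤ 2 * (2 * ‖w‖) ^ (k + 1) := norm_bdfDelta_exp_neg_sub_le k (by linarith)
  rcases eq_or_ne w 0 with rfl | hw0
  · have hD0 : D = 0 := by simpa using hD
    simp only [hD0, sub_self, norm_zero]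
    positivity
  have hw_pos : 0 < ‖w‖ := norm_pos_iff.mpr hw0
  set u := (D - w) / w
  have hDu : D = w * (1 + u) := by
    simp only [u]
    field_simp
    ring
  have hu : ‖u‖ ≤ 2 ^ (k + 2) * ‖w‖ ^ k := by
    rw [norm_div, div_le_iff₀ hw_pos]
    exact hD.trans_eq (by ring)
  have hu_half : ‖u‖ ≤ 1 / 2 := by
    have : (2 * ‖w‖) ^ k ≤ 2 * ‖w‖ := pow_le_of_le_one (by positivity) (by linarith) (by omega)
    have h4 : 2 ^ (k + 2) * ‖w‖ ^ k = 4 * (2 * ‖w‖) ^ k := by ring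
    linarith
  calc ‖D ^ (γ : ℂ) - w ^ (γ : ℂ)‖ ≤ 3 * ‖w‖ ^ γ * ‖u‖ := by
        rw [hDu]
        exact norm_mul_one_add_cpow_sub_cpow_le hγ harg hu_half
    _ ≤ 3 * ‖w‖ ^ γ * (2 ^ (k + 2) * ‖w‖ ^ k) := by gcongr
    _ = 3 * 2 ^ (k + 2) * ‖w‖ ^ ((k : ℝ) + γ) := by
        rw [Real.rpow_add hw_pos, Real.rpow_natCast]
        ring

lemma exists_bound_norm_bdfDelta_exp_neg_cpow_sub_cpow (k : ℕ) {γ : ℝ} (hγ : 0 ≤ γ) (R : ℝ) :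
    ∃ B, ∀ w : ℂ, ‖w‖ ≤ R → ‖bdfDelta k (Complex.exp (-w)) ^ (γ : ℂ) - w ^ (γ : ℂ)‖ ≤ B := by
  obtain ⟨M, hM⟩ := (isCompact_closedBall (0 : ℂ) R).exists_bound_of_continuousOn
    (f := fun w => bdfDelta k (Complex.exp (-w))) (by unfold bdfDelta; fun_prop)
  refine ⟨M ^ γ + R ^ γ, fun w hw => ?_⟩
  have hD : ‖bdfDelta k (Complex.exp (-w))‖ ≤ M := hM w (mem_closedBall_zero_iff.mpr hw)
  calc ‖bdfDelta k (Complex.exp (-w)) ^ (γ : ℂ) - w ^ (γ : ℂ)‖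
      ≤ ‖bdfDelta k (Complex.exp (-w))‖ ^ γ + ‖w‖ ^ γ := by
        rw [← Complex.norm_cpow_real, ← Complex.norm_cpow_real]
        exact norm_sub_le _ _
    _ ≤ M ^ γ + R ^ γ := by gcongr

lemma exists_norm_bdfDelta_exp_neg_cpow_sub_cpow_le_mul_rpow {k : ℕ} (hk : 1 ≤ k) {γ : ℝ}
    (hγ : γ ∈ Set.Icc 0 1) (R : ℝ) :
    ∃ C > 0, ∀ w : ℂ, |w.arg| ≤ 2 * π / 3 → ‖w‖ ≤ R →
      ‖bdfDelta k (Complex.exp (-w)) ^ (γ : ℂ) - w ^ (γ : ℂ)‖ ≤ C * ‖w‖ ^ ((k : ℝ) + γ) := by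
  obtain ⟨B, hB⟩ := exists_bound_norm_bdfDelta_exp_neg_cpow_sub_cpow k hγ.1 R
  set ρ : ℝ := 1 / 16
  refine ⟨max (3 * 2 ^ (k + 2)) (B / ρ ^ ((k : ℝ) + γ)), lt_max_of_lt_left (by positivity),
    fun w harg hw => ?_⟩
  rcases le_or_gt ‖w‖ ρ with hnear | hfar
  · refine (norm_bdfDelta_exp_neg_cpow_sub_cpow_le hk (abs_le.mpr ⟨by linarith [hγ.1], hγ.2⟩)
      harg hnear).trans ?_
    gcongr
    exact le_max_left _ _
  · have hB0 : 0 ≤ B := (norm_nonneg _).trans (hB w hw)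
    calc ‖bdfDelta k (Complex.exp (-w)) ^ (γ : ℂ) - w ^ (γ : ℂ)‖ ≤ B := hB w hw
      _ = B / ρ ^ ((k : ℝ) + γ) * ρ ^ ((k : ℝ) + γ) := (div_mul_cancel₀ _ (by positivity)).symm
      _ ≤ B / ρ ^ ((k : ℝ) + γ) * ‖w‖ ^ ((k : ℝ) + γ) := by
          gcongr
          linarith [hγ.1]
      _ ≤ _ := by
          gcongr
          exact le_max_right _ _

lemma norm_eq_and_abs_arg_eq_of_eq_mul_exp {r θ : ℝ} (hr : 0 < r) (hθ : θ ∈ Set.Ioo 0 π)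
    {z : ℂ} (hz : z = r * Complex.exp (θ * Complex.I) ∨ z = r * Complex.exp (-θ * Complex.I)) :
    ‖z‖ = r ∧ |z.arg| = θ := by
  obtain ⟨φ, hφ, rfl, hφθ⟩ : ∃ φ ∈ Set.Ioc (-π) π,
      z = r * Complex.exp (φ * Complex.I) ∧ |φ| = θ := by
    rcases hz with rfl | rfl
    · exact ⟨θ, ⟨by linarith [hθ.1, pi_pos], hθ.2.le⟩, rfl, abs_of_pos hθ.1⟩
    · exact ⟨-θ, ⟨by linarith [hθ.2], by linarith [hθ.1, pi_pos]⟩, by push_cast; ring_nf,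
        by rw [abs_neg, abs_of_pos hθ.1]⟩
  rw [norm_mul, Complex.norm_exp_ofReal_mul_I, Complex.norm_real, norm_of_nonneg hr.le, mul_one,
    Complex.exp_mul_I, Complex.arg_mul_cos_add_sin_mul_I hr hφ]
  exact ⟨rfl, hφθ⟩

lemma abs_arg_le_and_norm_mul_le_of_mem_contourTrunc {θ κ τ : ℝ} (hθ : θ ∈ Set.Ioo 0 π)
    (hκ : 0 < κ) (hτ : 0 < τ) (hκτ : κ * τ * Real.sin θ ≤ π) {z : ℂ}
    (hz : z ∈ contourTrunc θ κ τ) : |z.arg| ≤ θ ∧ ‖z‖ * τ ≤ π / Real.sin θ := by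
  have hsin := Real.sin_pos_of_pos_of_lt_pi hθ.1 hθ.2
  rcases hz with ⟨hnorm, harg⟩ | ⟨r, hκr, hrτ, hray⟩
  · rw [hnorm, le_div_iff₀ hsin]
    exact ⟨harg, hκτ⟩
  · obtain ⟨hnorm, harg⟩ := norm_eq_and_abs_arg_eq_of_eq_mul_exp (hκ.trans_le hκr) hθ hray
    rw [hnorm, ← le_div_iff₀ hτ, div_div, mul_comm (Real.sin θ)]
    exact ⟨harg.le, hrτ⟩

theorem bdfDelta_tau_pow_gamma_error_general (k : ℕ) (hk1 : 1 ≤ k)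
    (γ : ℝ) (hγ : γ ∈ Set.Ioo (0 : ℝ) 1) (κ : ℝ) (hκ : 0 < κ) :
    ∃ θ₀ ∈ Set.Ioo (π / 2) π, ∀ θ ∈ Set.Ioc (π / 2) θ₀,
      ∃ c > (0 : ℝ), ∀ τ : ℝ, 0 < τ → κ * τ * Real.sin θ ≤ π →
        ∀ z ∈ contourTrunc θ κ τ,
          ‖(bdfDelta k (Complex.exp (-z * (τ : ℂ))) / (τ : ℂ)) ^ (γ : ℂ)
              - z ^ (γ : ℂ)‖
            ≤ c * τ ^ k * ‖z‖ ^ ((k : ℝ) + γ) := by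
  have hπ := pi_pos
  refine ⟨2 * π / 3, ⟨by linarith, by linarith⟩, fun θ hθ => ?_⟩
  obtain ⟨C, hC_pos, hC⟩ := exists_norm_bdfDelta_exp_neg_cpow_sub_cpow_le_mul_rpow hk1
    (Set.Ioo_subset_Icc_self hγ) (π / Real.sin θ)
  refine ⟨C, hC_pos, fun τ hτ hκτ z hz => ?_⟩
  obtain ⟨harg, hnorm⟩ := abs_arg_le_and_norm_mul_le_of_mem_contourTrunc
    ⟨by linarith [hθ.1], by linarith [hθ.2]⟩ hκ hτ hκτ hz
  have hτ0 : (τ : ℂ) ≠ 0 := Complex.ofReal_ne_zero.mpr hτ.ne'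
  have hw_norm : ‖z * τ‖ = ‖z‖ * τ := by
    rw [norm_mul, Complex.norm_real, norm_of_nonneg hτ.le]
  calc ‖(bdfDelta k (Complex.exp (-z * τ)) / τ) ^ (γ : ℂ) - z ^ (γ : ℂ)‖
      = ‖(bdfDelta k (Complex.exp (-(z * τ))) / τ) ^ (γ : ℂ) - (z * τ / τ) ^ (γ : ℂ)‖ := by
        rw [neg_mul, mul_div_cancel_right₀ _ hτ0]
    _ = ‖bdfDelta k (Complex.exp (-(z * τ))) ^ (γ : ℂ) - (z * τ) ^ (γ : ℂ)‖ / τ ^ γ :=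
        norm_div_cpow_sub_div_cpow hτ _ _ γ
    _ ≤ C * ‖z * τ‖ ^ ((k : ℝ) + γ) / τ ^ γ := by
        gcongr
        refine hC _ ?_ (hw_norm.trans_le hnorm)
        rw [Complex.arg_mul_real hτ]
        linarith [hθ.2]
    _ = C * τ ^ k * ‖z‖ ^ ((k : ℝ) + γ) := by
        rw [hw_norm, Real.mul_rpow (norm_nonneg z) hτ.le, Real.rpow_add hτ, Real.rpow_natCast]
        field_simp

/-- For 1 ≤ k ≤ 6, γ ∈ (0,1), κ > 0: there is θ₀ ∈ (π/2, π) such that for every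
θ ∈ (π/2, θ₀] there is c > 0 with |(δ_τ(e^{−zτ}))^γ − z^γ| ≤ c·τ^k·|z|^{k+γ}
on Γ^τ_{θ,κ}, whenever κ·τ·sin θ ≤ π. -/
theorem bdfDelta_tau_pow_gamma_error (k : ℕ) (hk1 : 1 ≤ k) (hk6 : k ≤ 6)
    (γ : ℝ) (hγ : γ ∈ Set.Ioo (0 : ℝ) 1) (κ : ℝ) (hκ : 0 < κ) :
    ∃ θ₀ ∈ Set.Ioo (π / 2) π, ∀ θ ∈ Set.Ioc (π / 2) θ₀,
      ∃ c > (0 : ℝ), ∀ τ : ℝ, 0 < τ → κ * τ * Real.sin θ ≤ π →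
        ∀ z ∈ contourTrunc θ κ τ,
          ‖(bdfDelta k (Complex.exp (-z * (τ : ℂ))) / (τ : ℂ)) ^ (γ : ℂ)
              - z ^ (γ : ℂ)‖
            ≤ c * τ ^ k * ‖z‖ ^ ((k : ℝ) + γ) :=
  bdfDelta_tau_pow_gamma_error_general k hk1 γ hγ κ hκ
end

section
/- For every integer k with 1 ≤ k ≤ 6 and every σ > 0 there exists θ₀ ∈ (π/2, π) such that for every θ ∈ (π/2, θ₀] there exists κ₀ > 0 with: for every κ ≥ κ₀ there is a constant c > 0 such that for all τ ∈ (0,1] with κ·τ·sin θ ≤ π and all z ∈ Γ^τ_{θ,κ}, one has |δ_τ(e^{−(σ+z)τ}) − (σ+z)| ≤ c·τ^k·|σ+z|^{k+1}, and moreover |δ_τ(e^{−(σ+z)τ}) − (σ+z)| ≤ c·τ^k·|z|^{k+1}. -/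
/-!
Since `δ(ξ) = -logTaylor (k + 1) (ξ - 1)`, the BDF error `δ(e^{-w}) - w` is the remainder of the
degree-`k` Taylor polynomial of `log (1 + x)` at `x = e^{-w} - 1`; this is `O(|w|^{k+1})` near
`0`, and by compactness the same bound holds with a larger constant on any disk `|w| ≤ R`.
On the contour `|z| τ sin θ ≤ π`, so `w = (σ + z) τ` stays in the disk of radius
`σ + π / sin θ`, and dividing by `τ` gives the first estimate. The second follows from
`|σ + z| ≤ (3/2) |z|` once `κ ≥ 2σ`.
-/

open Real

theorem le_mul_pow_of_le_of_le_mul_pow {a t A M ρ : ℝ} {n : ℕ} (ht : 0 ≤ t) (hA : 0 ≤ A)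
    (hρ : 0 < ρ) (hM : a ≤ M) (ha : 0 ≤ a) (hsmall : t ≤ ρ → a ≤ A * t ^ n) :
    a ≤ (A + M / ρ ^ n) * t ^ n := by
  have hMρ : 0 ≤ M / ρ ^ n * t ^ n := by have := ha.trans hM; positivity
  rcases le_or_gt t ρ with htρ | htρ
  · nlinarith [hsmall htρ]
  · have : M ≤ M / ρ ^ n * t ^ n := by
      rw [div_mul_eq_mul_div, le_div_iff₀ (by positivity)]
      exact mul_le_mul_of_nonneg_left (pow_le_pow_left₀ hρ.le htρ.le n) (ha.trans hM)
    nlinarith [pow_nonneg ht n]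

theorem bdfDelta_eq_neg_logTaylor (k : ℕ) (ξ : ℂ) :
    bdfDelta k ξ = -Complex.logTaylor (k + 1) (ξ - 1) := by
  have hrange : Finset.range (k + 1) = insert 0 (Finset.Icc 1 k) := by
    ext j; simp only [Finset.mem_range, Finset.mem_insert, Finset.mem_Icc]; omega
  rw [bdfDelta, Complex.logTaylor, hrange, Finset.sum_insert (by simp), Nat.cast_zero, div_zero,
    zero_add, ← Finset.sum_neg_distrib]
  refine Finset.sum_congr rfl fun j _ => ?_
  rw [pow_succ, mul_neg_one, neg_mul, ← mul_pow, neg_one_mul, neg_sub]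
  ring

theorem continuous_bdfDelta (k : ℕ) : Continuous (bdfDelta k) := by
  unfold bdfDelta; fun_prop

theorem norm_bdfDelta_exp_neg_sub_le_of_norm_le {w : ℂ} (k : ℕ) (hw : ‖w‖ ≤ 1 / 4) :
    ‖bdfDelta k (Complex.exp (-w)) - w‖ ≤ 2 ^ (k + 2) * ‖w‖ ^ (k + 1) := by
  set x := Complex.exp (-w) - 1
  have hx : ‖x‖ ≤ 2 * ‖w‖ := by
    simpa using Complex.norm_exp_sub_one_le (x := -w) (by rw [norm_neg]; linarith)
  have hlog : Complex.log (1 + x) = -w := by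
    have him : |w.im| < π := (Complex.abs_im_le_norm w).trans_lt (by linarith [pi_gt_three])
    rw [add_sub_cancel, Complex.log_exp] <;> simp <;> linarith [abs_lt.mp him]
  have hremainder : bdfDelta k (Complex.exp (-w)) - w =
      Complex.log (1 + x) - Complex.logTaylor (k + 1) x := by
    rw [hlog, bdfDelta_eq_neg_logTaylor]; ring
  rw [hremainder]
  calc _ ≤ ‖x‖ ^ (k + 1) * (1 - ‖x‖)⁻¹ / (k + 1) :=
        Complex.norm_log_sub_logTaylor_le k (by linarith)
    _ ≤ (2 * ‖w‖) ^ (k + 1) * 2 / 1 := by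
        have hpos : 0 < 1 - ‖x‖ := by linarith
        have hinv : (1 - ‖x‖)⁻¹ ≤ 2 := by
          rw [inv_le_comm₀ hpos (by norm_num)]; linarith
        gcongr
        exact le_add_of_nonneg_left k.cast_nonneg
    _ = 2 ^ (k + 2) * ‖w‖ ^ (k + 1) := by ring

theorem exists_norm_bdfDelta_exp_neg_sub_le (k : ℕ) (R : ℝ) :
    ∃ C > 0, ∀ w : ℂ, ‖w‖ ≤ R → ‖bdfDelta k (Complex.exp (-w)) - w‖ ≤ C * ‖w‖ ^ (k + 1) := by
  obtain ⟨M, hM⟩ := (isCompact_closedBall (0 : ℂ) R).exists_bound_of_continuousOn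
    (f := fun w => bdfDelta k (Complex.exp (-w)) - w)
    ((continuous_bdfDelta k).comp (by fun_prop) |>.sub continuous_id).continuousOn
  refine ⟨2 ^ (k + 2) + |M| / (1 / 4) ^ (k + 1), by positivity, fun w hw => ?_⟩
  exact le_mul_pow_of_le_of_le_mul_pow (norm_nonneg w) (by positivity) (by norm_num)
    ((hM w (by simpa using hw)).trans (le_abs_self M)) (norm_nonneg _)
    (norm_bdfDelta_exp_neg_sub_le_of_norm_le k)

theorem norm_bdfDelta_exp_div_sub_le {k : ℕ} {R C τ : ℝ} {u : ℂ}
    (hC : ∀ w : ℂ, ‖w‖ ≤ R → ‖bdfDelta k (Complex.exp (-w)) - w‖ ≤ C * ‖w‖ ^ (k + 1))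
    (hτ : 0 < τ) (hu : ‖u‖ * τ ≤ R) :
    ‖bdfDelta k (Complex.exp (-u * τ)) / τ - u‖ ≤ C * τ ^ k * ‖u‖ ^ (k + 1) := by
  have hτ' : (τ : ℂ) ≠ 0 := Complex.ofReal_ne_zero.mpr hτ.ne'
  have hnorm : ‖u * τ‖ = ‖u‖ * τ := by
    rw [norm_mul, Complex.norm_real, Real.norm_of_nonneg hτ.le]
  have hscale : bdfDelta k (Complex.exp (-u * τ)) / τ - u =
      (bdfDelta k (Complex.exp (-(u * τ))) - u * τ) / τ := by
    rw [neg_mul, sub_div, mul_div_cancel_right₀ _ hτ']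
  rw [hscale, norm_div, Complex.norm_real, Real.norm_of_nonneg hτ.le, div_le_iff₀ hτ]
  calc _ ≤ C * ‖u * τ‖ ^ (k + 1) := hC _ (hnorm ▸ hu)
    _ = C * τ ^ k * ‖u‖ ^ (k + 1) * τ := by rw [hnorm]; ring

theorem norm_of_mem_contourTrunc {θ κ τ : ℝ} {z : ℂ} (hκ : 0 ≤ κ) (hτ : 0 < τ)
    (hsin : 0 < Real.sin θ) (hκτ : κ * τ * Real.sin θ ≤ π) (hz : z ∈ contourTrunc θ κ τ) :
    κ ≤ ‖z‖ ∧ ‖z‖ * τ * Real.sin θ ≤ π := by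
  rcases hz with ⟨hzκ, -⟩ | ⟨r, hκr, hr, hray⟩
  · exact ⟨hzκ.ge, hzκ ▸ hκτ⟩
  · have hzr : ‖z‖ = r := by
      rw [← Complex.ofReal_neg] at hray
      rcases hray with rfl | rfl <;>
        rw [norm_mul, Complex.norm_exp_ofReal_mul_I, Complex.norm_real,
          Real.norm_of_nonneg (hκ.trans hκr), mul_one]
    rw [hzr, mul_assoc]
    exact ⟨hκr, (le_div_iff₀ (by positivity)).mp hr⟩

theorem bdfDelta_tau_shift_error_general (k : ℕ)
    (σ : ℝ) (hσ : 0 < σ) :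
    ∃ θ₀ ∈ Set.Ioo (π / 2) π, ∀ θ ∈ Set.Ioc (π / 2) θ₀,
      ∃ κ₀ > (0 : ℝ), ∀ κ : ℝ, κ₀ ≤ κ →
        ∃ c > (0 : ℝ), ∀ τ ∈ Set.Ioc (0 : ℝ) 1, κ * τ * Real.sin θ ≤ π →
          ∀ z ∈ contourTrunc θ κ τ,
            ‖bdfDelta k (Complex.exp (-((σ : ℂ) + z) * (τ : ℂ))) / (τ : ℂ)
                - ((σ : ℂ) + z)‖
              ≤ c * τ ^ k * ‖(σ : ℂ) + z‖ ^ (k + 1) ∧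
            ‖bdfDelta k (Complex.exp (-((σ : ℂ) + z) * (τ : ℂ))) / (τ : ℂ)
                - ((σ : ℂ) + z)‖
              ≤ c * τ ^ k * ‖z‖ ^ (k + 1) := by
  refine ⟨3 * π / 4, ⟨by linarith [pi_pos], by linarith [pi_pos]⟩, fun θ hθ => ?_⟩
  have hsin : 0 < Real.sin θ :=
    sin_pos_of_pos_of_lt_pi (by linarith [pi_pos, hθ.1]) (by linarith [pi_pos, hθ.2])
  refine ⟨2 * σ, by positivity, fun κ hκ => ?_⟩
  obtain ⟨C, hC0, hC⟩ := exists_norm_bdfDelta_exp_neg_sub_le k (σ + π / Real.sin θ)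
  refine ⟨C * (3 / 2) ^ (k + 1), by positivity, fun τ ⟨hτ0, hτ1⟩ hκτ z hz => ?_⟩
  obtain ⟨hκz, hzτ⟩ := norm_of_mem_contourTrunc (by linarith) hτ0 hsin hκτ hz
  have hσz : ‖(σ : ℂ) + z‖ ≤ σ + ‖z‖ := by
    simpa [abs_of_pos hσ] using norm_add_le (σ : ℂ) z
  have hu : ‖(σ : ℂ) + z‖ * τ ≤ σ + π / Real.sin θ :=
    calc ‖(σ : ℂ) + z‖ * τ ≤ (σ + ‖z‖) * τ := by gcongr
      _ = σ * τ + ‖z‖ * τ := by ring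
      _ ≤ σ + π / Real.sin θ :=
        add_le_add (mul_le_of_le_one_right hσ.le hτ1) ((le_div_iff₀ hsin).mpr hzτ)
  have herr := norm_bdfDelta_exp_div_sub_le hC hτ0 hu
  have hC32 : C ≤ C * (3 / 2) ^ (k + 1) :=
    le_mul_of_one_le_right hC0.le (one_le_pow₀ (by norm_num))
  constructor
  · exact herr.trans (by gcongr)
  · calc _ ≤ C * τ ^ k * ‖(σ : ℂ) + z‖ ^ (k + 1) := herr
      _ ≤ C * τ ^ k * (3 / 2 * ‖z‖) ^ (k + 1) := by gcongr; linarith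
      _ = C * (3 / 2) ^ (k + 1) * τ ^ k * ‖z‖ ^ (k + 1) := by ring

/-- For 1 ≤ k ≤ 6 and σ > 0: |δ_τ(e^{−(σ+z)τ}) − (σ+z)| ≤ c·τ^k·|σ+z|^{k+1}
and ≤ c·τ^k·|z|^{k+1} on Γ^τ_{θ,κ}, for κ large enough. -/
theorem bdfDelta_tau_shift_error (k : ℕ) (hk1 : 1 ≤ k) (hk6 : k ≤ 6)
    (σ : ℝ) (hσ : 0 < σ) :
    ∃ θ₀ ∈ Set.Ioo (π / 2) π, ∀ θ ∈ Set.Ioc (π / 2) θ₀,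
      ∃ κ₀ > (0 : ℝ), ∀ κ : ℝ, κ₀ ≤ κ →
        ∃ c > (0 : ℝ), ∀ τ ∈ Set.Ioc (0 : ℝ) 1, κ * τ * Real.sin θ ≤ π →
          ∀ z ∈ contourTrunc θ κ τ,
            ‖bdfDelta k (Complex.exp (-((σ : ℂ) + z) * (τ : ℂ))) / (τ : ℂ)
                - ((σ : ℂ) + z)‖
              ≤ c * τ ^ k * ‖(σ : ℂ) + z‖ ^ (k + 1) ∧
            ‖bdfDelta k (Complex.exp (-((σ : ℂ) + z) * (τ : ℂ))) / (τ : ℂ)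
                - ((σ : ℂ) + z)‖
              ≤ c * τ ^ k * ‖z‖ ^ (k + 1) :=
  bdfDelta_tau_shift_error_general k σ hσ
end

section
/- For every integer k with 1 ≤ k ≤ 6 and every σ > 0 there exists θ₀ ∈ (π/2, π) such that for every θ ∈ (π/2, θ₀] there exists κ₀ > 0 with: for every κ ≥ κ₀ there is a constant c > 0 such that for all τ ∈ (0,1] with κ·τ·sin θ ≤ π and all z ∈ Γ^τ_{θ,κ}, one has |μ₁(e^{−(σ+z)τ}) − 1| ≤ c·τ^k·|z|^k. -/
open Real

/-- Starting-correction coefficients a_j^{(k)} of the BDF-k scheme. -/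
noncomputable def aCoef : ℕ → ℕ → ℂ
  | 2, 1 => 1 / 2
  | 3, 1 => 11 / 12
  | 3, 2 => -(5 / 12)
  | 4, 1 => 31 / 24
  | 4, 2 => -(7 / 6)
  | 4, 3 => 3 / 8
  | 5, 1 => 1181 / 720
  | 5, 2 => -(177 / 80)
  | 5, 3 => 341 / 240
  | 5, 4 => -(251 / 720)
  | 6, 1 => 2837 / 1440
  | 6, 2 => -(2543 / 720)
  | 6, 3 => 17 / 5
  | 6, 4 => -(1201 / 720)
  | 6, 5 => 95 / 288
  | _, _ => 0

/-- μ₁(ξ) = δ(ξ)·(ξ/(1−ξ) + ∑_{j=1}^{k−1} a_j^{(k)} ξ^j). -/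
noncomputable def mu1 (k : ℕ) (ξ : ℂ) : ℂ :=
  bdfDelta k ξ * (ξ / (1 - ξ) + ∑ j ∈ Finset.Icc 1 (k - 1), aCoef k j * ξ ^ j)

/-!
The starting corrections are chosen so that `μ₁(ξ) - 1 = (1 - ξ)^k Q_k(ξ)` for an explicit
polynomial `Q_k`. Write `ξ = e^{-w}` with `w = (σ + z)τ`. On the contour, `τ ≤ 1` and `κ ≥ 1` give
`|z| ≥ 1` and `τ|z| ≤ π / sin θ`, so `w` stays in a fixed ball, `|w| ≤ (1 + σ)τ|z|` and
`|1 - e^{-w}| ≤ |w| e^{|w|}`; a bound for `Q_k` on the image of that ball finishes the estimate.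

The factorisation needs `ξ ≠ 1`, since at `ξ = 1` the term `ξ / (1 - ξ)` takes the junk value `0`.
For `θ ≤ 2π/3` we have `sin θ > 1/2`, hence `|Im w| < 2π`, and `w ≠ 0` because the contour
avoids the ray `(-∞, 0]`.
-/

open Polynomial

noncomputable def muQ : ℕ → ℂ[X]
  | 1 => -1
  | 2 => -1 + C (1 / 4) * X
  | 3 => -1 + C (37 / 72) * X - C (5 / 36) * X ^ 2
  | 4 => -1 + C (223 / 288) * X - C (5 / 12) * X ^ 2 + C (3 / 32) * X ^ 3
  | 5 => -1 + C (44437 / 43200) * X - C (8929 / 10800) * X ^ 2 + C (5347 / 14400) * X ^ 3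
      - C (251 / 3600) * X ^ 4
  | 6 => -1 + C (36773 / 28800) * X - C (4907 / 3600) * X ^ 2 + C (8801 / 9600) * X ^ 3
      - C (743 / 2160) * X ^ 4 + C (95 / 1728) * X ^ 5
  | _ => 0

theorem mu1_sub_one_eq_mul_muQ {k : ℕ} (hk1 : 1 ≤ k) (hk6 : k ≤ 6) {ξ : ℂ} (hξ : ξ ≠ 1) :
    mu1 k ξ - 1 = (1 - ξ) ^ k * (muQ k).eval ξ := by
  have h : (1 : ℂ) - ξ ≠ 0 := sub_ne_zero.2 hξ.symm
  interval_cases k <;>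
    simp (disch := norm_num) only [mu1, bdfDelta, muQ, aCoef, Finset.sum_Icc_succ_top,
      Finset.Icc_self, Finset.sum_singleton, Nat.add_one_sub_one, Finset.Icc_eq_empty_of_lt,
      Finset.sum_empty, eval_add, eval_sub, eval_mul, eval_C, eval_X, eval_pow, eval_neg,
      eval_one] <;>
    field_simp <;> ring

theorem exists_norm_mu1_exp_neg_sub_one_le {k : ℕ} (hk1 : 1 ≤ k) (hk6 : k ≤ 6) (M : ℝ) :
    ∃ C > (0 : ℝ), ∀ w : ℂ, ‖w‖ ≤ M → Complex.exp (-w) ≠ 1 →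
      ‖mu1 k (Complex.exp (-w)) - 1‖ ≤ C * ‖w‖ ^ k := by
  obtain ⟨B, hB⟩ := (isCompact_closedBall (0 : ℂ) (exp M)).exists_bound_of_continuousOn
    (muQ k).continuous.continuousOn
  refine ⟨max B 1 * exp M ^ k, by positivity, fun w hwM hξ => ?_⟩
  have hexp : ‖Complex.exp (-w) - 1‖ ≤ ‖w‖ * exp M := by
    have h := Complex.norm_exp_sub_sum_le_norm_mul_exp (-w) 1
    simp only [Finset.range_one, Finset.sum_singleton, pow_zero, Nat.factorial_zero,
      Nat.cast_one, div_one, pow_one, norm_neg] at h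
    exact h.trans (by gcongr)
  have hQ : ‖(muQ k).eval (Complex.exp (-w))‖ ≤ max B 1 := by
    refine (hB _ ?_).trans (le_max_left _ _)
    rw [mem_closedBall_zero_iff]
    exact (Complex.norm_exp_le_exp_norm _).trans (by rw [norm_neg]; gcongr)
  calc ‖mu1 k (Complex.exp (-w)) - 1‖
      = ‖Complex.exp (-w) - 1‖ ^ k * ‖(muQ k).eval (Complex.exp (-w))‖ := by
        rw [mu1_sub_one_eq_mul_muQ hk1 hk6 hξ, norm_mul, norm_pow, norm_sub_rev]
    _ ≤ (‖w‖ * exp M) ^ k * max B 1 := by gcongr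
    _ = max B 1 * exp M ^ k * ‖w‖ ^ k := by ring

theorem Complex.exp_ne_one_of_abs_im_lt {w : ℂ} (hw : w ≠ 0) (him : |w.im| < 2 * π) :
    Complex.exp w ≠ 1 := by
  rw [Ne, Complex.exp_eq_one_iff]
  rintro ⟨n, rfl⟩
  have hn : |(n : ℝ)| < 1 := by
    have him' : ((n : ℂ) * (2 * π * Complex.I)).im = n * (2 * π) := by simp
    rw [him', abs_mul, abs_of_pos two_pi_pos] at him
    exact (mul_lt_iff_lt_one_left two_pi_pos).1 him
  rw [← Int.cast_abs, ← Int.cast_one, Int.cast_lt, Int.abs_lt_one_iff] at hn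
  simp [hn] at hw

theorem Complex.ofReal_add_mem_slitPlane {σ : ℝ} (hσ : 0 ≤ σ) {z : ℂ}
    (hz : z ∈ Complex.slitPlane) : (σ : ℂ) + z ∈ Complex.slitPlane := by
  rw [Complex.mem_slitPlane_iff] at hz ⊢
  simp only [Complex.add_re, Complex.ofReal_re, Complex.add_im, Complex.ofReal_im, zero_add]
  exact hz.imp (fun h => by linarith) id

theorem norm_mem_Icc_of_mem_contourTrunc {θ κ τ : ℝ} (hκ : 0 ≤ κ) (hτ : 0 < τ)
    (hθ : 0 < sin θ) (hκτ : κ * τ * sin θ ≤ π) {z : ℂ} (hz : z ∈ contourTrunc θ κ τ) :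
    ‖z‖ ∈ Set.Icc κ (π / (τ * sin θ)) := by
  rcases hz with ⟨hnorm, -⟩ | ⟨r, hκr, hrτ, hz | hz⟩
  · rw [hnorm, Set.mem_Icc, le_div_iff₀ (by positivity)]
    exact ⟨le_rfl, by linarith⟩
  all_goals
    have hr : ‖z‖ = r := by simp [hz, Complex.norm_exp, abs_of_nonneg (hκ.trans hκr)]
    exact hr ▸ ⟨hκr, hrτ⟩

theorem mem_slitPlane_of_mem_contourTrunc {θ κ τ : ℝ} (hκ : 0 < κ) (hθ : θ ∈ Set.Ioo 0 π)
    {z : ℂ} (hz : z ∈ contourTrunc θ κ τ) : z ∈ Complex.slitPlane := by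
  rcases hz with ⟨hnorm, harg⟩ | ⟨r, hκr, -, hz | hz⟩
  · refine Complex.mem_slitPlane_iff_arg.2 ⟨?_, ?_⟩
    · intro h
      rw [h, abs_of_pos pi_pos] at harg
      linarith [hθ.2]
    · rintro rfl
      rw [norm_zero] at hnorm
      linarith
  all_goals
    have hr : r ≠ 0 := (hκ.trans_le hκr).ne'
    have hsin : sin θ ≠ 0 := (sin_pos_of_pos_of_lt_pi hθ.1 hθ.2).ne'
    refine Complex.mem_slitPlane_iff.2 (Or.inr ?_)
  · rw [hz, Complex.im_ofReal_mul, Complex.exp_ofReal_mul_I_im]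
    exact mul_ne_zero hr hsin
  · rw [hz, ← Complex.ofReal_neg, Complex.im_ofReal_mul, Complex.exp_ofReal_mul_I_im, sin_neg]
    exact mul_ne_zero hr (neg_ne_zero.2 hsin)

theorem half_lt_sin_of_mem_Ioc {θ : ℝ} (hθ : θ ∈ Set.Ioc (π / 2) (2 * π / 3)) :
    1 / 2 < sin θ := by
  have h : sin (π / 3) ≤ sin (π - θ) :=
    strictMonoOn_sin.monotoneOn ⟨by linarith [pi_pos], by linarith [pi_pos]⟩
      ⟨by linarith [hθ.2, pi_pos], by linarith [hθ.1]⟩ (by linarith [hθ.2])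
  rw [sin_pi_div_three, sin_pi_sub] at h
  have h3 : 1 < √3 := by
    rw [show (1 : ℝ) = √1 by simp]
    exact Real.sqrt_lt_sqrt zero_le_one (by norm_num)
  linarith

/-- For 1 ≤ k ≤ 6 and σ > 0: |μ₁(e^{−(σ+z)τ}) − 1| ≤ c·τ^k·|z|^k on Γ^τ_{θ,κ},
for κ large enough. -/
theorem mu1_error (k : ℕ) (hk1 : 1 ≤ k) (hk6 : k ≤ 6) (σ : ℝ) (hσ : 0 < σ) :
    ∃ θ₀ ∈ Set.Ioo (π / 2) π, ∀ θ ∈ Set.Ioc (π / 2) θ₀,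
      ∃ κ₀ > (0 : ℝ), ∀ κ : ℝ, κ₀ ≤ κ →
        ∃ c > (0 : ℝ), ∀ τ ∈ Set.Ioc (0 : ℝ) 1, κ * τ * Real.sin θ ≤ π →
          ∀ z ∈ contourTrunc θ κ τ,
            ‖mu1 k (Complex.exp (-((σ : ℂ) + z) * (τ : ℂ))) - 1‖
              ≤ c * τ ^ k * ‖z‖ ^ k := by
  refine ⟨2 * π / 3, ⟨by linarith [pi_pos], by linarith [pi_pos]⟩, fun θ hθ => ?_⟩
  have hsin : 1 / 2 < sin θ := half_lt_sin_of_mem_Ioc hθ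
  have hsin_pos : 0 < sin θ := by linarith
  have hθπ : θ ∈ Set.Ioo 0 π := ⟨by linarith [hθ.1, pi_pos], by linarith [hθ.2, pi_pos]⟩
  obtain ⟨C, hC, hbound⟩ := exists_norm_mu1_exp_neg_sub_one_le hk1 hk6 (σ + π / sin θ)
  refine ⟨1, one_pos, fun κ hκ => ⟨C * (1 + σ) ^ k, by positivity, fun τ hτ hκτ z hz => ?_⟩⟩
  obtain ⟨hκz, hzτ⟩ := norm_mem_Icc_of_mem_contourTrunc (by linarith) hτ.1 hsin_pos hκτ hz
  have hτz : τ * ‖z‖ ≤ π / sin θ := by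
    rw [le_div_iff₀ (mul_pos hτ.1 hsin_pos)] at hzτ
    rw [le_div_iff₀ hsin_pos]
    linarith
  set w : ℂ := ((σ : ℂ) + z) * τ
  have hw : ‖w‖ ≤ (σ + ‖z‖) * τ := by
    rw [norm_mul, Complex.norm_real, norm_of_nonneg hτ.1.le]
    refine mul_le_mul_of_nonneg_right ((norm_add_le _ _).trans_eq ?_) hτ.1.le
    rw [Complex.norm_real, norm_of_nonneg hσ.le]
  have hw_ne : w ≠ 0 :=
    mul_ne_zero (Complex.slitPlane_ne_zero (Complex.ofReal_add_mem_slitPlane hσ.le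
      (mem_slitPlane_of_mem_contourTrunc (by linarith) hθπ hz)))
      (Complex.ofReal_ne_zero.2 hτ.1.ne')
  have hw_im : |(-w).im| < 2 * π := calc
    |(-w).im| = |z.im| * τ := by simp [w, abs_mul, abs_of_pos hτ.1]
    _ ≤ ‖z‖ * τ := mul_le_mul_of_nonneg_right (Complex.abs_im_le_norm z) hτ.1.le
    _ = τ * ‖z‖ := mul_comm _ _
    _ ≤ π / sin θ := hτz
    _ < 2 * π := (div_lt_iff₀ hsin_pos).2 (by nlinarith [pi_pos])
  have hw_le : ‖w‖ ≤ σ + π / sin θ := by nlinarith [hτ.2]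
  rw [neg_mul]
  calc ‖mu1 k (Complex.exp (-w)) - 1‖
      ≤ C * ‖w‖ ^ k :=
        hbound w hw_le (Complex.exp_ne_one_of_abs_im_lt (neg_ne_zero.2 hw_ne) hw_im)
    _ ≤ C * ((1 + σ) * τ * ‖z‖) ^ k := by
        gcongr
        nlinarith [mul_le_mul_of_nonneg_left (hκ.trans hκz) (mul_pos hσ hτ.1).le]
    _ = C * (1 + σ) ^ k * τ ^ k * ‖z‖ ^ k := by rw [mul_pow, mul_pow]; ring
end

section
/- For every γ ∈ (0,1), every θ ∈ (π/2, π) and every integer k ≥ 1 there exists a constant c > 0 such that for all τ > 0 and all t > 0: ∫_{π/(τ·sin θ)}^{∞} e^{t·r·cos θ}·r^{−1−γ} dr ≤ c·τ^k·t^{γ−k}. -/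
open Real MeasureTheory

/-- For γ ∈ (0,1), θ ∈ (π/2, π) and k ≥ 1 there is c > 0 such that for all τ > 0, t > 0:
∫_{π/(τ sin θ)}^∞ e^{t r cos θ} r^{−1−γ} dr ≤ c τ^k t^{γ−k}. -/
theorem tail_integral_bound (γ θ : ℝ) (k : ℕ) (hγ : γ ∈ Set.Ioo (0 : ℝ) 1)
    (hθ : θ ∈ Set.Ioo (π / 2) π) (hk : 1 ≤ k) :
    ∃ c > (0 : ℝ), ∀ τ : ℝ, 0 < τ → ∀ t : ℝ, 0 < t →
      (∫ r in Set.Ioi (π / (τ * Real.sin θ)), Real.exp (t * r * Real.cos θ) * r ^ (-1 - γ))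
        ≤ c * τ ^ k * t ^ (γ - (k : ℝ)) := by
  obtain ⟨hγ0, hγ1⟩ := hγ
  obtain ⟨hθ1, hθ2⟩ := hθ
  have hs : 0 < Real.sin θ :=
    Real.sin_pos_of_pos_of_lt_pi (lt_trans (by positivity) hθ1) hθ2
  have hc0 : 0 < -Real.cos θ := by
    have := Real.cos_neg_of_pi_div_two_lt_of_lt hθ1 (by linarith [Real.pi_pos])
    linarith
  have hkγ : (0:ℝ) < (k:ℝ) - γ := by
    have : (1:ℝ) ≤ (k:ℝ) := by exact_mod_cast hk
    linarith
  set c0 : ℝ := -Real.cos θ with hc0def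
  refine ⟨(k.factorial : ℝ) * c0 ^ (γ - (k:ℝ)) * (Real.sin θ / π) ^ k / k, by
      have hkpos : (0:ℝ) < k := by exact_mod_cast hk
      have : (0:ℝ) < (k.factorial : ℝ) := by exact_mod_cast Nat.factorial_pos k
      positivity, ?_⟩
  intro τ hτ t ht
  set a : ℝ := π / (τ * Real.sin θ) with hadef
  have ha : 0 < a := by
    have := Real.pi_pos
    positivity
  set K : ℝ := (k.factorial : ℝ) * (t * c0) ^ (γ - (k:ℝ)) with hKdef
  have hK : 0 < K := by
    have : (0:ℝ) < (k.factorial : ℝ) := by exact_mod_cast Nat.factorial_pos k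
    positivity
  -- pointwise bound
  have hbound : ∀ r ∈ Set.Ioi a, Real.exp (t * r * Real.cos θ) * r ^ (-1 - γ)
      ≤ K * r ^ (-1 - (k:ℝ)) := by
    intro r hr
    have hr0 : 0 < r := lt_trans ha hr
    set x : ℝ := t * r * c0 with hxdef
    have hx0 : 0 < x := by positivity
    have hexp : Real.exp (t * r * Real.cos θ) = Real.exp (-x) := by
      rw [hxdef, hc0def]; ring_nf
    have hf1 : (1:ℝ) ≤ (k.factorial : ℝ) := by
      exact_mod_cast Nat.one_le_iff_ne_zero.mpr (Nat.factorial_ne_zero k)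
    have main : x ^ ((k:ℝ) - γ) ≤ (k.factorial : ℝ) * Real.exp x := by
      rcases le_total x 1 with hx1 | hx1
      · have h1 : x ^ ((k:ℝ) - γ) ≤ 1 := Real.rpow_le_one hx0.le hx1 hkγ.le
        have h4 : (1:ℝ) ≤ Real.exp x := Real.one_le_exp hx0.le
        nlinarith
      · have h1 : x ^ ((k:ℝ) - γ) ≤ x ^ ((k:ℝ)) := by
          apply Real.rpow_le_rpow_of_exponent_le hx1
          linarith
        have h2 : x ^ ((k:ℝ)) = x ^ k := Real.rpow_natCast x k
        have h3 : x ^ k / (k.factorial : ℝ) ≤ Real.exp x :=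
          Real.pow_div_factorial_le_exp x hx0.le k
        rw [div_le_iff₀ (by positivity)] at h3
        calc x ^ ((k:ℝ) - γ) ≤ x ^ k := h1.trans_eq h2
          _ ≤ Real.exp x * (k.factorial : ℝ) := h3
          _ = (k.factorial : ℝ) * Real.exp x := by ring
    have key : Real.exp (-x) ≤ (k.factorial : ℝ) * x ^ (γ - (k:ℝ)) := by
      have hy : (0:ℝ) < x ^ ((k:ℝ) - γ) := Real.rpow_pos_of_pos hx0 _
      rw [Real.exp_neg, show γ - (k:ℝ) = -((k:ℝ) - γ) by ring, Real.rpow_neg hx0.le,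
        ← one_div, mul_comm, inv_mul_eq_div, div_le_div_iff₀ (Real.exp_pos x) hy, one_mul]
      linarith [main]
    have hsplit : x ^ (γ - (k:ℝ)) = (t * c0) ^ (γ - (k:ℝ)) * r ^ (γ - (k:ℝ)) := by
      rw [hxdef, show t * r * c0 = (t * c0) * r by ring,
        Real.mul_rpow (by positivity) hr0.le]
    have hrpow : r ^ (γ - (k:ℝ)) * r ^ (-1 - γ) = r ^ (-1 - (k:ℝ)) := by
      rw [← Real.rpow_add hr0]; ring_nf
    calc Real.exp (t * r * Real.cos θ) * r ^ (-1 - γ)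
        = Real.exp (-x) * r ^ (-1 - γ) := by rw [hexp]
      _ ≤ (k.factorial : ℝ) * x ^ (γ - (k:ℝ)) * r ^ (-1 - γ) := by
          apply mul_le_mul_of_nonneg_right key (Real.rpow_nonneg hr0.le _)
      _ = K * (r ^ (γ - (k:ℝ)) * r ^ (-1 - γ)) := by rw [hsplit, hKdef]; ring
      _ = K * r ^ (-1 - (k:ℝ)) := by rw [hrpow]
  have hlt : (-1 - (k:ℝ)) < -1 := by
    have : (0:ℝ) < (k:ℝ) := by exact_mod_cast hk
    linarith
  have hgint : IntegrableOn (fun r : ℝ => K * r ^ (-1 - (k:ℝ))) (Set.Ioi a) :=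
    (integrableOn_Ioi_rpow_of_lt hlt ha).const_mul K
  have hfmeas : AEStronglyMeasurable (fun r : ℝ => Real.exp (t * r * Real.cos θ) * r ^ (-1 - γ))
      (volume.restrict (Set.Ioi a)) := by
    apply Measurable.aestronglyMeasurable
    fun_prop
  have hfint : IntegrableOn (fun r : ℝ => Real.exp (t * r * Real.cos θ) * r ^ (-1 - γ))
      (Set.Ioi a) := by
    apply Integrable.mono' hgint hfmeas
    filter_upwards [ae_restrict_mem measurableSet_Ioi] with r hr
    have hr0 : 0 < r := lt_trans ha hr
    rw [Real.norm_eq_abs, abs_of_nonneg (by positivity)]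
    exact hbound r hr
  have hmono : (∫ r in Set.Ioi a, Real.exp (t * r * Real.cos θ) * r ^ (-1 - γ))
      ≤ ∫ r in Set.Ioi a, K * r ^ (-1 - (k:ℝ)) :=
    setIntegral_mono_on hfint hgint measurableSet_Ioi hbound
  have hcomp : (∫ r in Set.Ioi a, K * r ^ (-1 - (k:ℝ)))
      = K * (-a ^ ((-1 - (k:ℝ)) + 1) / ((-1 - (k:ℝ)) + 1)) := by
    rw [integral_const_mul, integral_Ioi_rpow_of_lt hlt ha]
  refine hmono.trans ?_
  rw [hcomp]
  have h1 : ((-1 - (k:ℝ)) + 1) = -(k:ℝ) := by ring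
  have hkpos : (0:ℝ) < (k:ℝ) := by exact_mod_cast hk
  have h2 : -a ^ ((-1 - (k:ℝ)) + 1) / ((-1 - (k:ℝ)) + 1) = a ^ (-(k:ℝ)) / (k:ℝ) := by
    rw [h1]; field_simp
  rw [h2]
  have ha_inv : a ^ (-(k:ℝ)) = (τ * Real.sin θ / π) ^ k := by
    rw [Real.rpow_neg ha.le, Real.rpow_natCast, hadef]
    rw [← inv_pow, inv_div]
  have hπ := Real.pi_pos
  rw [ha_inv, hKdef]
  have htc : (t * c0) ^ (γ - (k:ℝ)) = t ^ (γ - (k:ℝ)) * c0 ^ (γ - (k:ℝ)) :=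
    Real.mul_rpow ht.le hc0.le
  rw [htc]
  have hτs : (τ * Real.sin θ / π) ^ k = τ ^ k * (Real.sin θ / π) ^ k := by
    rw [mul_div_assoc, mul_pow]
  rw [hτs]
  apply le_of_eq
  ring
end
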